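/- arXiv:1604.07227 — 6 statements merged into one kernel-verified Lean document; each statement's English description precedes it below -/
import Mathlib

section
/- Every finite symplectic module (A, φ) is isometric to the standard symplectic module B × B* for some finite abelian group B, where the standard form is ((a₁,ψ₁),(a₂,ψ₂)) ↦ ψ₂(a₁) - ψ₁(a₂). -/
/-!
Induction on `|A|`. Let `n` be the exponent of `A` and `x` an element of order `n`. The values of
`φ x` are killed by `n`, so they lie in `(1/n)ℤ/ℤ ≅ ℤ/n`; if they formed a proper subgroup, of
order `m < n`, then `m • x` would pair trivially with everything, contradicting nondegeneracy.
Hence `φ x y = 1/n` for some `y`, and `s • x + t • y ↦ (s, t)` splits `A` as the orthogonal sum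
of the hyperbolic plane `ℤ/n × ℤ/n`, which is standard with `B = ℤ/n`, and of `{x, y}^⊥`, which
is nondegenerate and smaller. Orthogonal sums of standard modules are standard because
`(B₁ × B₂)* ≅ B₁* × B₂*`.
-/

universe u v w

local notation "𝕋" => AddCircle (1 : ℚ)

theorem AddMonoidHom.apply_swap_eq_neg {A M : Type*} [AddCommGroup A] [AddCommGroup M]
    {φ : A →+ A →+ M} (hφ : ∀ a, φ a a = 0) (a b : A) : φ b a = -φ a b := by
  have h := hφ (a + b)
  simp only [map_add, AddMonoidHom.add_apply, hφ, zero_add, add_zero] at h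
  exact eq_neg_of_add_eq_zero_left h

def AddMonoidHom.coprodEquiv (M N P : Type*) [AddZeroClass M] [AddZeroClass N] [AddCommMonoid P] :
    (M →+ P) × (N →+ P) ≃+ (M × N →+ P) where
  toFun f := f.1.coprod f.2
  invFun f := (f.comp (inl M N), f.comp (inr M N))
  left_inv f := by simp
  right_inv := coprod_unique
  map_add' f g := by ext; simp [add_add_add_comm]

def AddMonoidHom.prodKerEquiv {A H : Type*} [AddCommGroup A] [AddCommGroup H] (π : A →+ H)
    (ι : H →+ A) (h : Function.RightInverse ι π) : H × π.ker ≃+ A where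
  toFun p := ι p.1 + p.2
  invFun a := (π a, ⟨a - ι (π a), by simp [h (π a)]⟩)
  left_inv := by
    rintro ⟨p, w, hw⟩
    rw [AddMonoidHom.mem_ker] at hw
    ext <;> simp [h p, hw]
  right_inv a := by simp
  map_add' p q := by simp only [Prod.fst_add, Prod.snd_add, map_add, AddSubgroup.coe_add]; abel

namespace ZMod

variable {n : ℕ} {G : Type*} [AddCommGroup G]

variable (n) in
def zmultiplesHom (g : G) (hg : n • g = 0) : ZMod n →+ G :=
  lift n ⟨_root_.zmultiplesHom G g, by simpa using hg⟩

@[simp]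
theorem zmultiplesHom_intCast {g : G} (hg : n • g = 0) (z : ℤ) :
    zmultiplesHom n g hg z = z • g :=
  lift_coe _ _ _

@[simp]
theorem zmultiplesHom_natCast {g : G} (hg : n • g = 0) (m : ℕ) :
    zmultiplesHom n g hg m = m • g := by
  simpa using zmultiplesHom_intCast hg m

@[simp]
theorem zmultiplesHom_one {g : G} (hg : n • g = 0) : zmultiplesHom n g hg 1 = g := by
  simpa using zmultiplesHom_intCast hg 1

theorem addMonoidHom_ext {f f' : ZMod n →+ G} (h : f 1 = f' 1) : f = f' := by
  ext s
  obtain ⟨z, rfl⟩ := intCast_surjective s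
  rw [← zsmul_one, map_zsmul, map_zsmul, h]

theorem zmultiplesHom_injective {g : G} (hg : n • g = 0) (h : addOrderOf g = n) :
    Function.Injective (zmultiplesHom n g hg) := by
  rw [injective_iff_map_eq_zero]
  intro s hs
  obtain ⟨z, rfl⟩ := intCast_surjective s
  rw [zmultiplesHom_intCast, ← addOrderOf_dvd_iff_zsmul_eq_zero, h] at hs
  exact (intCast_zmod_eq_zero_iff_dvd z n).mpr hs

theorem map_zmultiplesHom {H : Type*} [AddCommGroup H] {g : G} (hg : n • g = 0) {F : G →+ H}
    {f : ZMod n →+ H} {c : ZMod n} (hc : F g = f c) (s : ZMod n) :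
    F (zmultiplesHom n g hg s) = f (s * c) := by
  have : F.comp (zmultiplesHom n g hg) = f.comp (AddMonoidHom.mulRight c) :=
    addMonoidHom_ext (by simpa using hc)
  exact DFunLike.congr_fun this s

variable [NeZero n]

variable (n) in
def toRatCircle : ZMod n →+ 𝕋 :=
  zmultiplesHom n ((1 / n : ℚ) : 𝕋)
    (by rw [← AddCircle.coe_nsmul, nsmul_eq_mul, mul_one_div_cancel (NeZero.ne _),
      AddCircle.coe_period])

theorem toRatCircle_injective : Function.Injective (toRatCircle n) := by
  unfold toRatCircle
  exact zmultiplesHom_injective _ (AddCircle.addOrderOf_period_div (NeZero.pos n))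

@[simp]
theorem toRatCircle_eq_zero {s : ZMod n} : toRatCircle n s = 0 ↔ s = 0 :=
  map_eq_zero_iff _ toRatCircle_injective

theorem exists_toRatCircle_eq {q : 𝕋} (hq : n • q = 0) : ∃ s, toRatCircle n s = q := by
  obtain ⟨m, -, rfl⟩ := (AddCircle.nsmul_eq_zero_iff (NeZero.pos n)).mp hq
  exact ⟨m, by rw [AddCircle.natCast_div_mul_eq_nsmul, toRatCircle, zmultiplesHom_natCast]⟩

theorem exists_toRatCircle_comp_eq (f : G →+ 𝕋) (hf : ∀ a, n • f a = 0) :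
    ∃ g : G →+ ZMod n, ∀ a, toRatCircle n (g a) = f a := by
  choose g hg using fun a => exists_toRatCircle_eq (hf a)
  exact ⟨AddMonoidHom.mk' g fun a b => toRatCircle_injective (by simp [hg]), hg⟩

variable (n) in
noncomputable def toRatCircleDual : ZMod n ≃+ (ZMod n →+ 𝕋) :=
  AddEquiv.ofBijective ((AddMonoidHom.compHom (toRatCircle n)).comp AddMonoidHom.mul) <| by
    refine ⟨(injective_iff_map_eq_zero _).mpr fun t ht => ?_, fun f => ?_⟩
    · simpa using DFunLike.congr_fun ht 1
    · obtain ⟨t, ht⟩ := exists_toRatCircle_eq (q := f 1) <| by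
        rw [← map_nsmul, nsmul_one, natCast_self, map_zero]
      exact ⟨t, addMonoidHom_ext (by simpa using ht)⟩

@[simp]
theorem toRatCircleDual_apply (t s : ZMod n) : toRatCircleDual n t s = toRatCircle n (t * s) := rfl

end ZMod

-- `B` may live in another universe than `A`: `IsStandard.prod` glues `ZMod n × ZMod n` to
-- subgroups of `A`.
def IsStandard {A : Type w} [AddCommGroup A] (φ : A → A → 𝕋) : Prop :=
  ∃ (B : Type v) (_ : AddCommGroup B) (_ : Fintype B), ∃ e : A ≃+ B × (B →+ 𝕋),
    ∀ a b, φ a b = (e b).2 (e a).1 - (e a).2 (e b).1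

section IsStandard

variable {A A' : Type*} [AddCommGroup A] [AddCommGroup A'] {φ : A → A → 𝕋}

theorem IsStandard.of_isometry {φ' : A' → A' → 𝕋} (h : IsStandard.{v} φ') (e : A ≃+ A')
    (he : ∀ a b, φ a b = φ' (e a) (e b)) : IsStandard.{v} φ := by
  obtain ⟨B, _, _, f, hf⟩ := h
  exact ⟨B, ‹_›, ‹_›, e.trans f, fun a b => (he a b).trans (hf _ _)⟩

theorem isStandard_of_subsingleton [Subsingleton A] (hφ : ∀ a, φ a a = 0) :
    IsStandard.{v} φ := by
  let e : A ≃+ PUnit.{v + 1} × (PUnit.{v + 1} →+ 𝕋) :=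
    { toFun := 0
      invFun := 0
      left_inv := fun _ => Subsingleton.elim _ _
      right_inv := fun _ => Subsingleton.elim _ _
      map_add' := by simp }
  refine ⟨PUnit, inferInstance, inferInstance, e, fun a b => ?_⟩
  simp [Subsingleton.elim b a, hφ, Subsingleton.elim (e a).2 0]

theorem IsStandard.prod {A₂ : Type*} [AddCommGroup A₂] {φ₂ : A₂ → A₂ → 𝕋}
    (h₁ : IsStandard.{v} φ) (h₂ : IsStandard.{w} φ₂) :
    IsStandard.{max v w} fun p q : A × A₂ => φ p.1 q.1 + φ₂ p.2 q.2 := by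
  obtain ⟨B₁, _, _, e₁, he₁⟩ := h₁
  obtain ⟨B₂, _, _, e₂, he₂⟩ := h₂
  refine ⟨B₁ × B₂, inferInstance, inferInstance,
    ((e₁.prodCongr e₂).trans (AddEquiv.prodProdProdComm _ _ _ _)).trans
      ((AddEquiv.refl _).prodCongr (AddMonoidHom.coprodEquiv _ _ _)), fun p q => ?_⟩
  simp [he₁, he₂, AddEquiv.prodCongr, AddMonoidHom.coprodEquiv]
  abel

end IsStandard

def hyperbolicForm (n : ℕ) [NeZero n] (p q : ZMod n × ZMod n) : 𝕋 :=
  ZMod.toRatCircle n (p.1 * q.2) - ZMod.toRatCircle n (q.1 * p.2)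

theorem isStandard_hyperbolicForm (n : ℕ) [NeZero n] : IsStandard.{0} (hyperbolicForm n) :=
  ⟨ZMod n, inferInstance, inferInstance, (AddEquiv.refl _).prodCongr (ZMod.toRatCircleDual n),
    fun p q => by simp [hyperbolicForm, AddEquiv.prodCongr, mul_comm]⟩

section HyperbolicPair

variable {A : Type*} [AddCommGroup A] {n : ℕ} {x y : A}

def hyperbolicPairHom (hx : n • x = 0) (hy : n • y = 0) : ZMod n × ZMod n →+ A :=
  (ZMod.zmultiplesHom n x hx).coprod (ZMod.zmultiplesHom n y hy)

variable [NeZero n] {φ : A →+ A →+ 𝕋} (hφ : ∀ a, φ a a = 0) (hx : n • x = 0) (hy : n • y = 0)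
  {σ χ : A →+ ZMod n} (hσ : ∀ a, ZMod.toRatCircle n (σ a) = φ a y)
  (hχ : ∀ a, ZMod.toRatCircle n (χ a) = φ x a)

include hφ hσ hχ in
theorem apply_hyperbolicPairHom (p : ZMod n × ZMod n) (b : A) :
    φ (hyperbolicPairHom hx hy p) b =
      ZMod.toRatCircle n (p.1 * χ b) - ZMod.toRatCircle n (p.2 * σ b) := by
  have hxb := ZMod.map_zmultiplesHom hx (F := φ.flip b) (hχ b).symm p.1
  have hby := ZMod.map_zmultiplesHom hy (F := φ b) (hσ b).symm p.2
  simp only [AddMonoidHom.flip_apply] at hxb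
  rw [hyperbolicPairHom, AddMonoidHom.coprod_apply, map_add, AddMonoidHom.add_apply, hxb,
    AddMonoidHom.apply_swap_eq_neg hφ, hby, sub_eq_add_neg]

include hφ hσ hχ in
theorem rightInverse_hyperbolicPairHom (hxy : φ x y = ZMod.toRatCircle n 1) :
    Function.RightInverse (hyperbolicPairHom hx hy) (σ.prod χ) := by
  have hχx : χ x = 0 := ZMod.toRatCircle_injective (by simp [hχ, hφ])
  have hχy : χ y = 1 := ZMod.toRatCircle_injective (by simp [hχ, hxy])
  have hσx : σ x = 1 := ZMod.toRatCircle_injective (by simp [hσ, hxy])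
  have hσy : σ y = 0 := ZMod.toRatCircle_injective (by simp [hσ, hφ])
  intro p
  ext
  · apply ZMod.toRatCircle_injective
    simp [hσ, apply_hyperbolicPairHom hφ hx hy hσ hχ, hχy, hσy]
  · apply ZMod.toRatCircle_injective
    rw [AddMonoidHom.prod_apply, hχ, AddMonoidHom.apply_swap_eq_neg hφ _ x,
      apply_hyperbolicPairHom hφ hx hy hσ hχ, hχx, hσx]
    simp

include hφ hσ hχ in
theorem apply_hyperbolicPairHom_add (hxy : φ x y = ZMod.toRatCircle n 1) (p q : ZMod n × ZMod n)
    {w w' : A} (hw : w ∈ (σ.prod χ).ker) (hw' : w' ∈ (σ.prod χ).ker) :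
    φ (hyperbolicPairHom hx hy p + w) (hyperbolicPairHom hx hy q + w') =
      hyperbolicForm n p q + φ w w' := by
  have hπ := rightInverse_hyperbolicPairHom hφ hx hy hσ hχ hxy
  simp only [AddMonoidHom.mem_ker, AddMonoidHom.prod_apply, Prod.mk_eq_zero] at hw hw'
  have hq : σ (hyperbolicPairHom hx hy q + w') = q.1 ∧
      χ (hyperbolicPairHom hx hy q + w') = q.2 := by
    simpa [hw'.1, hw'.2] using Prod.ext_iff.mp (hπ q)
  rw [map_add φ, AddMonoidHom.add_apply, apply_hyperbolicPairHom hφ hx hy hσ hχ, hq.1, hq.2,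
    map_add (φ w), AddMonoidHom.apply_swap_eq_neg hφ (hyperbolicPairHom hx hy q) w,
    apply_hyperbolicPairHom hφ hx hy hσ hχ, hw.1, hw.2]
  simp [hyperbolicForm, mul_comm]

end HyperbolicPair

theorem exists_addEquiv_hyperbolicForm_prod {A : Type*} [AddCommGroup A] {φ : A →+ A →+ 𝕋}
    (hφ : ∀ a, φ a a = 0) {n : ℕ} [NeZero n] {x y : A} (hx : n • x = 0) (hy : n • y = 0)
    (hxy : φ x y = ZMod.toRatCircle n 1) :
    ∃ (W : AddSubgroup A) (e : (ZMod n × ZMod n) × W ≃+ A),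
      ∀ p q, φ (e p) (e q) = hyperbolicForm n p.1 q.1 + φ p.2 q.2 := by
  obtain ⟨σ, hσ⟩ := ZMod.exists_toRatCircle_comp_eq (φ.flip y) fun a => by
    rw [AddMonoidHom.flip_apply, ← map_nsmul, hy, map_zero]
  obtain ⟨χ, hχ⟩ := ZMod.exists_toRatCircle_comp_eq (φ x) fun a => by
    rw [← AddMonoidHom.nsmul_apply, ← map_nsmul, hx, map_zero, AddMonoidHom.zero_apply]
  have hπ := rightInverse_hyperbolicPairHom hφ hx hy hσ hχ hxy
  exact ⟨_, AddMonoidHom.prodKerEquiv _ _ hπ, fun p q =>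
    apply_hyperbolicPairHom_add hφ hx hy hσ hχ hxy p.1 q.1 p.2.2 q.2.2⟩

theorem exists_apply_eq_toRatCircle_one {A : Type*} [AddCommGroup A] [Finite A]
    {φ : A →+ A →+ 𝕋} (hnd : ∀ a, φ a = 0 → a = 0) :
    ∃ x y : A, φ x y = ZMod.toRatCircle (AddMonoid.exponent A) 1 := by
  obtain ⟨x, hx⟩ :=
    AddMonoid.exists_addOrderOf_eq_exponent (AddMonoid.ExponentExists.of_finite (G := A))
  obtain ⟨χ, hχ⟩ := ZMod.exists_toRatCircle_comp_eq (φ x) fun a => by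
    rw [← AddMonoidHom.nsmul_apply, ← map_nsmul, AddMonoid.exponent_nsmul_eq_zero, map_zero,
      AddMonoidHom.zero_apply]
  have hχm : ∀ a, Nat.card χ.range • χ a = 0 := fun a => by
    simpa only [AddSubgroup.coe_nsmul, ZeroMemClass.coe_zero] using
      congrArg Subtype.val (card_nsmul_eq_zero' (G := χ.range) (x := ⟨χ a, a, rfl⟩))
  have hmx : Nat.card χ.range • x = 0 := hnd _ <| AddMonoidHom.ext fun a => by
    rw [map_nsmul, AddMonoidHom.nsmul_apply, ← hχ, ← map_nsmul, hχm, map_zero,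
      AddMonoidHom.zero_apply]
  have hm : Nat.card χ.range = AddMonoid.exponent A := Nat.dvd_antisymm
    (by simpa only [Nat.card_zmod] using AddSubgroup.card_addSubgroup_dvd_card χ.range)
    (hx ▸ addOrderOf_dvd_of_nsmul_eq_zero hmx :)
  obtain ⟨y, hy⟩ := AddMonoidHom.range_eq_top.mp
    (AddSubgroup.eq_top_of_card_eq χ.range (by rw [hm, Nat.card_zmod])) 1
  exact ⟨x, y, by rw [← hχ, hy]⟩

theorem isStandard_of_nondegenerate {A : Type u} [AddCommGroup A] [Finite A] (φ : A →+ A →+ 𝕋)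
    (hφ : ∀ a, φ a a = 0) (hnd : ∀ a, φ a = 0 → a = 0) : IsStandard.{u} fun a b => φ a b := by
  induction hN : Nat.card A using Nat.strong_induction_on generalizing A with
  | _ N ih =>
  rcases subsingleton_or_nontrivial A with hA | hA
  · exact isStandard_of_subsingleton hφ
  obtain ⟨x, y, hxy⟩ := exists_apply_eq_toRatCircle_one hnd
  obtain ⟨W, e, he⟩ := exists_addEquiv_hyperbolicForm_prod hφ
    (AddMonoid.exponent_nsmul_eq_zero x) (AddMonoid.exponent_nsmul_eq_zero y) hxy
  have hcard : Nat.card W < N := by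
    have h1 : 1 < AddMonoid.exponent A := AddMonoid.one_lt_exponent
    have h2 : 0 < Nat.card W := Nat.card_pos
    rw [← hN, ← Nat.card_congr e.toEquiv, Nat.card_prod, Nat.card_prod, Nat.card_zmod]
    nlinarith [Nat.mul_le_mul h1 h1]
  have hWnd : ∀ w : W, (φ.comp W.subtype).compl₂ W.subtype w = 0 → w = 0 := by
    intro w hw
    have : e (0, w) = 0 := hnd _ <| AddMonoidHom.ext fun a => by
      obtain ⟨q, rfl⟩ := e.surjective a
      rw [he]
      simpa [hyperbolicForm] using DFunLike.congr_fun hw q.2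
    simpa using congrArg Prod.snd (e.map_eq_zero_iff.mp this)
  have hW := ih _ hcard ((φ.comp W.subtype).compl₂ W.subtype) (fun w => hφ w) hWnd rfl
  exact ((isStandard_hyperbolicForm _).prod hW).of_isometry e.symm fun a b => by
    simpa using he (e.symm a) (e.symm b)

/-- Every finite symplectic module is isometric to a standard one `B × Hom(B, ℚ/ℤ)`. -/
theorem symplectic_classification {A : Type u} [AddCommGroup A] [Fintype A]
    (φ : A → A → AddCircle (1 : ℚ))
    (hL : ∀ a b c : A, φ (a + b) c = φ a c + φ b c)
    (hR : ∀ a b c : A, φ a (b + c) = φ a b + φ a c)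
    (halt : ∀ a : A, φ a a = 0)
    (hnd : ∀ a : A, (∀ b : A, φ a b = 0) → a = 0) :
    ∃ (B : Type u) (_ : AddCommGroup B) (_ : Fintype B),
      ∃ e : A ≃+ B × (B →+ AddCircle (1 : ℚ)),
        ∀ a b : A, φ a b = (e b).2 (e a).1 - (e a).2 (e b).1 := by
  let Φ : A →+ A →+ AddCircle (1 : ℚ) :=
    AddMonoidHom.mk' (fun a => AddMonoidHom.mk' (φ a) (hR a)) fun a b => AddMonoidHom.ext (hL a b)
  exact isStandard_of_nondegenerate Φ halt fun a ha => hnd a (DFunLike.congr_fun ha)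
end

section
/- Every finite alternate module admits a Lagrangian, and moreover any isotropic subgroup is contained in some Lagrangian. -/
/-!
A maximal isotropic subgroup `L` is Lagrangian: if `a ⊥ L`, then `L + ℤa` is still isotropic
because `φ a a = 0`, so `a ∈ L` by maximality. A finite group has finitely many subgroups, so
every isotropic subgroup lies in a maximal one.
-/

namespace AddMonoidHom

variable {A M : Type*} [AddCommGroup A] [AddCommGroup M] (B : A →+ A →+ M)

def IsIsotropic (K : AddSubgroup A) : Prop :=
  ∀ x ∈ K, ∀ y ∈ K, B x y = 0

theorem isIsotropic_bot : B.IsIsotropic ⊥ := by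
  rintro x hx y -
  rw [AddSubgroup.mem_bot.1 hx, map_zero, zero_apply]

variable {B}

theorem apply_swap_of_alternating (halt : ∀ a, B a a = 0) (a b : A) : B b a = -B a b := by
  have h := halt (a + b)
  simp only [map_add, add_apply, halt, zero_add, add_zero] at h
  exact eq_neg_of_add_eq_zero_left h

theorem IsIsotropic.sup_zmultiples (halt : ∀ a, B a a = 0) {K : AddSubgroup A}
    (hK : B.IsIsotropic K) {a : A} (ha : ∀ k ∈ K, B a k = 0) :
    B.IsIsotropic (K ⊔ AddSubgroup.zmultiples a) := by
  intro x hx y hy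
  obtain ⟨k, hk, _, ⟨m, rfl⟩, rfl⟩ := AddSubgroup.mem_sup.1 hx
  obtain ⟨l, hl, _, ⟨n, rfl⟩, rfl⟩ := AddSubgroup.mem_sup.1 hy
  have hka : B k a = 0 := by rw [apply_swap_of_alternating halt, ha k hk, neg_zero]
  simp only [map_add, map_zsmul, add_apply, zsmul_apply, hK k hk l hl, ha l hl, hka, halt,
    smul_zero, add_zero]

theorem IsIsotropic.coe_eq_orthogonal_of_maximal (halt : ∀ a, B a a = 0) {L : AddSubgroup A}
    (hL : Maximal B.IsIsotropic L) : (L : Set A) = {a : A | ∀ l ∈ L, B a l = 0} := by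
  refine Set.Subset.antisymm (fun x hx l hl => hL.1 x hx l hl) fun a ha => ?_
  have hle := hL.2 (hL.1.sup_zmultiples halt ha) le_sup_left
  exact hle (AddSubgroup.mem_sup_right (AddSubgroup.mem_zmultiples a))

theorem IsIsotropic.exists_le_lagrangian [Finite A] (halt : ∀ a, B a a = 0)
    {K : AddSubgroup A} (hK : B.IsIsotropic K) :
    ∃ L : AddSubgroup A, K ≤ L ∧ (L : Set A) = {a : A | ∀ l ∈ L, B a l = 0} :=
  (Finite.exists_le_maximal hK).imp fun _ hL => ⟨hL.1, coe_eq_orthogonal_of_maximal halt hL.2⟩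

end AddMonoidHom

/-- Every finite alternate module admits a Lagrangian; moreover every isotropic
subgroup is contained in a Lagrangian. -/
theorem exists_lagrangian {A : Type*} [AddCommGroup A] [Fintype A]
    (φ : A → A → AddCircle (1 : ℚ))
    (hL : ∀ a b c : A, φ (a + b) c = φ a c + φ b c)
    (hR : ∀ a b c : A, φ a (b + c) = φ a b + φ a c)
    (halt : ∀ a : A, φ a a = 0) :
    (∃ L : AddSubgroup A, (L : Set A) = {a : A | ∀ l ∈ L, φ a l = 0}) ∧
    ∀ K : AddSubgroup A, (K : Set A) ⊆ {a : A | ∀ k ∈ K, φ a k = 0} →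
      ∃ L : AddSubgroup A, K ≤ L ∧ (L : Set A) = {a : A | ∀ l ∈ L, φ a l = 0} := by
  let B : A →+ A →+ AddCircle (1 : ℚ) :=
    AddMonoidHom.mk' (fun a => AddMonoidHom.mk' (φ a) (hR a)) fun a b => by
      ext c; exact hL a b c
  have key := fun K (hK : B.IsIsotropic K) => hK.exists_le_lagrangian halt
  exact ⟨(key ⊥ B.isIsotropic_bot).imp fun _ h => h.2, fun K hK => key K fun x hx => hK hx⟩
end

section
/- Let (A, φ) be a finite alternate module with kernel K_φ, and π: A → A/K_φ the projection. Then L ↦ π(L) is a bijection between the Lagrangians of (A, φ) and the Lagrangians of the induced symplectic module (A/K_φ, φ̄). -/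
/-- Projection induces a bijection between the Lagrangians of an alternate module and
the Lagrangians of its associated symplectic module `A/K_φ`. -/
theorem lagrangian_bijection_with_quotient {A : Type*} [AddCommGroup A] [Fintype A]
    (φ : A → A → AddCircle (1 : ℚ))
    (hL : ∀ a b c : A, φ (a + b) c = φ a c + φ b c)
    (hR : ∀ a b c : A, φ a (b + c) = φ a b + φ a c)
    (halt : ∀ a : A, φ a a = 0)
    (K : AddSubgroup A)
    (hK : (K : Set A) = {a : A | ∀ b : A, φ a b = 0})
    (ψ : A ⧸ K → A ⧸ K → AddCircle (1 : ℚ))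
    (hψ : ∀ a b : A, ψ (QuotientAddGroup.mk' K a) (QuotientAddGroup.mk' K b) = φ a b) :
    Set.BijOn (fun L : AddSubgroup A => AddSubgroup.map (QuotientAddGroup.mk' K) L)
      {L : AddSubgroup A | (L : Set A) = {a : A | ∀ l ∈ L, φ a l = 0}}
      {M : AddSubgroup (A ⧸ K) | (M : Set (A ⧸ K)) = {x | ∀ y ∈ M, ψ x y = 0}} := by
  set π := QuotientAddGroup.mk' K with hπ
  have hsurj : Function.Surjective π := QuotientAddGroup.mk'_surjective K
  have hker : π.ker = K := QuotientAddGroup.ker_mk' K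
  have hKle : ∀ L : AddSubgroup A, (L : Set A) = {a : A | ∀ l ∈ L, φ a l = 0} → K ≤ L := by
    intro L hLag a ha
    have h1 : ∀ b, φ a b = 0 := (Set.ext_iff.mp hK a).mp ha
    have h2 : a ∈ {a : A | ∀ l ∈ L, φ a l = 0} := fun l _ => h1 l
    exact (Set.ext_iff.mp hLag a).mpr h2
  have hcomap : ∀ L : AddSubgroup A, K ≤ L → AddSubgroup.comap π (AddSubgroup.map π L) = L := by
    intro L hKL
    rw [AddSubgroup.comap_map_eq, hker, sup_eq_left.mpr hKL]
  refine ⟨?_, ?_, ?_⟩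
  · -- MapsTo
    intro L hLag
    simp only [Set.mem_setOf_eq] at hLag ⊢
    ext x
    simp only [Set.mem_setOf_eq, SetLike.mem_coe, AddSubgroup.mem_map]
    constructor
    · rintro ⟨a, ha, rfl⟩ y hy
      obtain ⟨b, hb, rfl⟩ := hy
      rw [hψ]
      exact ((Set.ext_iff.mp hLag a).mp ha) b hb
    · intro hx
      obtain ⟨a, rfl⟩ := hsurj x
      refine ⟨a, ?_, rfl⟩
      have h2 : a ∈ {a : A | ∀ l ∈ L, φ a l = 0} := by
        intro l hl
        rw [← hψ]
        exact hx (π l) (AddSubgroup.mem_map_of_mem π hl)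
      exact (Set.ext_iff.mp hLag a).mpr h2
  · -- InjOn
    intro L1 h1 L2 h2 heq
    have := congrArg (AddSubgroup.comap π) heq
    simp only at this
    rwa [hcomap L1 (hKle L1 h1), hcomap L2 (hKle L2 h2)] at this
  · -- SurjOn
    intro M hM
    simp only [Set.mem_setOf_eq] at hM
    refine ⟨AddSubgroup.comap π M, ?_, ?_⟩
    · simp only [Set.mem_setOf_eq]
      ext a
      simp only [Set.mem_setOf_eq, SetLike.mem_coe, AddSubgroup.mem_comap]
      constructor
      · intro ha l hl
        rw [← hψ]
        exact ((Set.ext_iff.mp hM (π a)).mp ha) (π l) hl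
      · intro ha
        refine (Set.ext_iff.mp hM (π a)).mpr ?_
        intro y hy
        obtain ⟨b, rfl⟩ := hsurj y
        rw [hψ]
        exact ha b (AddSubgroup.mem_comap.mpr hy)
    · exact AddSubgroup.map_comap_eq_self_of_surjective hsurj M
end

section
/- Let A := Z/2 × Z/4 × Z/8 with basis e₁, e₂, e₃ and alternate bilinear form φ into Q/Z determined by φ(e₁,e₂) = 1/2, φ(e₁,e₃) = 1/2, φ(e₂,e₃) = -1/4. Then the kernel K_φ is the cyclic subgroup generated by e₁ + 2e₂ + 2e₃, is isomorphic to Z/4, and is not a direct factor of A. -/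
/-- The alternate form on `ℤ/2 × ℤ/4 × ℤ/8` given (on the standard basis) by
`φ(e₁,e₂) = 1/2`, `φ(e₁,e₃) = 1/2`, `φ(e₂,e₃) = -1/4`. -/
noncomputable def phiEx (a b : ZMod 2 × ZMod 4 × ZMod 8) : AddCircle (1 : ℚ) :=
  (↑((a.1.val * b.2.1.val - b.1.val * a.2.1.val : ℚ) / 2
    + (a.1.val * b.2.2.val - b.1.val * a.2.2.val : ℚ) / 2
    - (a.2.1.val * b.2.2.val - b.2.1.val * a.2.2.val : ℚ) / 4) : AddCircle (1 : ℚ))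

/-- Integer numerator (over denominator 4) of the form `phiEx`. -/
def nexAux (a b : ZMod 2 × ZMod 4 × ZMod 8) : ℤ :=
  2 * ((a.1.val : ℤ) * b.2.1.val - (b.1.val : ℤ) * a.2.1.val)
  + 2 * ((a.1.val : ℤ) * b.2.2.val - (b.1.val : ℤ) * a.2.2.val)
  - ((a.2.1.val : ℤ) * b.2.2.val - (b.2.1.val : ℤ) * a.2.2.val)

lemma phiEx_eq_zero_iff (a b : ZMod 2 × ZMod 4 × ZMod 8) :
    phiEx a b = 0 ↔ nexAux a b % 4 = 0 := by
  have hq : ((a.1.val * b.2.1.val - b.1.val * a.2.1.val : ℚ) / 2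
      + (a.1.val * b.2.2.val - b.1.val * a.2.2.val : ℚ) / 2
      - (a.2.1.val * b.2.2.val - b.2.1.val * a.2.2.val : ℚ) / 4) = (nexAux a b : ℚ) / 4 := by
    simp only [nexAux]; push_cast; ring
  rw [phiEx, hq, AddCircle.coe_eq_zero_iff]
  constructor
  · rintro ⟨n, hn⟩
    simp only [zsmul_eq_mul, mul_one] at hn
    have : (4 * n : ℤ) = nexAux a b := by
      have : (4 : ℚ) * n = nexAux a b := by field_simp at hn ⊢; linarith
      exact_mod_cast this
    omega
  · intro h
    obtain ⟨m, hm⟩ : (4 : ℤ) ∣ nexAux a b := Int.dvd_of_emod_eq_zero h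
    exact ⟨m, by rw [hm]; simp only [zsmul_eq_mul, mul_one]; push_cast; ring⟩

set_option maxRecDepth 10000 in
lemma nex_kernel_mem : ∀ a : ZMod 2 × ZMod 4 × ZMod 8, (∀ b, nexAux a b % 4 = 0) →
    (a = (0,0,0) ∨ a = (1,2,2) ∨ a = (0,0,4) ∨ a = (1,2,6)) := by decide

set_option maxRecDepth 10000 in
lemma nex_vanish : ∀ n : ℤ, n % 4 = 0 ∨ n % 4 = 1 ∨ n % 4 = 2 ∨ n % 4 = 3 := by omega

/-- The kernel of `phiEx` is the cyclic subgroup generated by `e₁ + 2e₂ + 2e₃`, is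
isomorphic to `ℤ/4`, and is not a direct factor. -/
theorem kernel_not_direct_factor :
    ((AddSubgroup.zmultiples ((1, 2, 2) : ZMod 2 × ZMod 4 × ZMod 8) : Set _) =
        {a : ZMod 2 × ZMod 4 × ZMod 8 | ∀ b, phiEx a b = 0}) ∧
    Nonempty (AddSubgroup.zmultiples ((1, 2, 2) : ZMod 2 × ZMod 4 × ZMod 8) ≃+ ZMod 4) ∧
    ¬ ∃ C : AddSubgroup (ZMod 2 × ZMod 4 × ZMod 8),
        IsCompl (AddSubgroup.zmultiples ((1, 2, 2) : ZMod 2 × ZMod 4 × ZMod 8)) C := by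
  set g : ZMod 2 × ZMod 4 × ZMod 8 := (1, 2, 2) with hg
  have h4g : (4 : ℤ) • g = 0 := by decide
  refine ⟨?_, ?_, ?_⟩
  · ext a
    simp only [SetLike.mem_coe, Set.mem_setOf_eq, AddSubgroup.mem_zmultiples_iff]
    constructor
    · rintro ⟨n, rfl⟩
      have key : n • g = (n % 4) • g := by
        conv_lhs => rw [← Int.mul_ediv_add_emod n 4]
        rw [add_zsmul, mul_zsmul, smul_comm, h4g, smul_zero, zero_add]
      intro b
      rw [phiEx_eq_zero_iff]
      rcases nex_vanish n with h | h | h | h <;> rw [key, h] <;> revert b <;> decide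
    · intro h
      have hP : ∀ b, nexAux a b % 4 = 0 := fun b => (phiEx_eq_zero_iff a b).1 (h b)
      rcases nex_kernel_mem a hP with rfl | rfl | rfl | rfl
      · exact ⟨0, by decide⟩
      · exact ⟨1, by decide⟩
      · exact ⟨2, by decide⟩
      · exact ⟨3, by decide⟩
  · set K := AddSubgroup.zmultiples g with hK
    set gK : K := ⟨g, AddSubgroup.mem_zmultiples g⟩ with hgK
    have hf4 : (zmultiplesHom K gK) (4 : ℤ) = 0 := by
      apply Subtype.ext
      simpa using h4g
    set φ : ZMod 4 →+ K := ZMod.lift 4 ⟨zmultiplesHom K gK, hf4⟩ with hφ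
    have hinj : Function.Injective φ := by
      rw [hφ, ZMod.lift_injective]
      intro m hm
      have hm' : m • g = 0 := congrArg Subtype.val hm
      have h3 : m • (2 : ZMod 8) = 0 := congrArg (fun x => x.2.2) hm'
      rw [zsmul_eq_mul] at h3
      have h3' : ((2 * m : ℤ) : ZMod 8) = 0 := by push_cast; rw [mul_comm]; exact h3
      obtain ⟨c, hc⟩ := (ZMod.intCast_zmod_eq_zero_iff_dvd _ _).1 h3'
      exact (ZMod.intCast_zmod_eq_zero_iff_dvd _ _).2 ⟨c, by omega⟩
    have hsurj : Function.Surjective φ := by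
      rintro ⟨x, n, hn⟩
      refine ⟨(n : ℤ), ?_⟩
      rw [hφ, ZMod.lift_coe]
      exact Subtype.ext hn
    exact ⟨(AddEquiv.ofBijective φ ⟨hinj, hsurj⟩).symm⟩
  · rintro ⟨C, hC⟩
    have hmem : ((0, 0, 1) : ZMod 2 × ZMod 4 × ZMod 8) ∈
        AddSubgroup.zmultiples g ⊔ C := by
      rw [codisjoint_iff.1 hC.codisjoint]; trivial
    obtain ⟨k, hk, c, hc, hkc⟩ := AddSubgroup.mem_sup.1 hmem
    obtain ⟨n, rfl⟩ := AddSubgroup.mem_zmultiples_iff.1 hk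
    have h4k : (4 : ℤ) • (n • g) = 0 := by
      rw [smul_comm, h4g, smul_zero]
    have h4e : (4 : ℤ) • ((0, 0, 1) : ZMod 2 × ZMod 4 × ZMod 8) = (0, 0, 4) := by decide
    have h4c : (4 : ℤ) • c = ((0, 0, 4) : ZMod 2 × ZMod 4 × ZMod 8) := by
      have h := congrArg (fun x : ZMod 2 × ZMod 4 × ZMod 8 => (4 : ℤ) • x) hkc
      simp only [smul_add] at h
      rw [h4k, zero_add, h4e] at h
      exact h
    have hcK : ((0, 0, 4) : ZMod 2 × ZMod 4 × ZMod 8) ∈ AddSubgroup.zmultiples g :=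
      AddSubgroup.mem_zmultiples_iff.2 ⟨2, by decide⟩
    have hcC : ((0, 0, 4) : ZMod 2 × ZMod 4 × ZMod 8) ∈ C := by
      rw [← h4c]; exact AddSubgroup.zsmul_mem C hc 4
    have : ((0, 0, 4) : ZMod 2 × ZMod 4 × ZMod 8) = 0 :=
      (AddSubgroup.disjoint_def.1 hC.disjoint) hcK hcC
    exact absurd this (by decide)
end

section
/- Let A := Z/2 × Z/4 × Z/8 with the alternate form φ determined by φ(e₁,e₂) = 1/2, φ(e₁,e₃) = 1/2, φ(e₂,e₃) = -1/4 on the standard basis. Then L₁ := ⟨e₃, e₁+2e₂⟩ and L₂ := ⟨e₁, 2e₂, 2e₃⟩ are both Lagrangians of (A, φ), L₁ ≅ Z/2 × Z/8, L₂ ≅ Z/2 × Z/2 × Z/4, and L₁ is not isomorphic to L₂. -/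
set_option maxRecDepth 8000

abbrev AEx := ZMod 2 × ZMod 4 × ZMod 8

def PdEx (a b : AEx) : Prop :=
  (2 * ((a.1.val : ℤ) * b.2.1.val - (b.1.val : ℤ) * a.2.1.val)
    + 2 * ((a.1.val : ℤ) * b.2.2.val - (b.1.val : ℤ) * a.2.2.val)
    - ((a.2.1.val : ℤ) * b.2.2.val - (b.2.1.val : ℤ) * a.2.2.val)) % 4 = 0

instance (a b : AEx) : Decidable (PdEx a b) := by unfold PdEx; infer_instance

lemma phi_zero_iff (a b : AEx) : phiEx a b = 0 ↔ PdEx a b := by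
  set m : ℤ := 2 * ((a.1.val : ℤ) * b.2.1.val - (b.1.val : ℤ) * a.2.1.val)
    + 2 * ((a.1.val : ℤ) * b.2.2.val - (b.1.val : ℤ) * a.2.2.val)
    - ((a.2.1.val : ℤ) * b.2.2.val - (b.2.1.val : ℤ) * a.2.2.val) with hm
  have hq : ((a.1.val * b.2.1.val - b.1.val * a.2.1.val : ℚ) / 2
      + (a.1.val * b.2.2.val - b.1.val * a.2.2.val : ℚ) / 2
      - (a.2.1.val * b.2.2.val - b.2.1.val * a.2.2.val : ℚ) / 4) = (m : ℚ) / 4 := by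
    rw [hm]; push_cast; ring
  rw [phiEx, hq, AddCircle.coe_eq_zero_iff]
  constructor
  · rintro ⟨n, hn⟩
    have h4 : (m : ℚ) = ((4 * n : ℤ) : ℚ) := by push_cast; rw [zsmul_eq_mul] at hn; linarith
    have : m = 4 * n := Int.cast_injective h4
    unfold PdEx; rw [← hm, this]; omega
  · intro h
    unfold PdEx at h; rw [← hm] at h
    refine ⟨m / 4, ?_⟩
    have h' : m / 4 * 4 = m := by omega
    rw [zsmul_eq_mul, mul_one, eq_div_iff (by norm_num : (4:ℚ) ≠ 0)]
    exact_mod_cast h'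

def memS₁ (a : AEx) : Prop := a.2.1.val = 2 * a.1.val
def memS₂ (a : AEx) : Prop := a.2.1.val % 2 = 0 ∧ a.2.2.val % 2 = 0

instance (a : AEx) : Decidable (memS₁ a) := by unfold memS₁; infer_instance
instance (a : AEx) : Decidable (memS₂ a) := by unfold memS₂; infer_instance

lemma S₁_add : ∀ a b : AEx, memS₁ a → memS₁ b → memS₁ (a + b) := by decide
lemma S₁_neg : ∀ a : AEx, memS₁ a → memS₁ (-a) := by decide
lemma S₂_add : ∀ a b : AEx, memS₂ a → memS₂ b → memS₂ (a + b) := by decide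
lemma S₂_neg : ∀ a : AEx, memS₂ a → memS₂ (-a) := by decide

def S₁ : AddSubgroup AEx where
  carrier := {a | memS₁ a}
  zero_mem' := by decide
  add_mem' := fun {a b} ha hb => S₁_add a b ha hb
  neg_mem' := fun {a} ha => S₁_neg a ha

def S₂ : AddSubgroup AEx where
  carrier := {a | memS₂ a}
  zero_mem' := by decide
  add_mem' := fun {a b} ha hb => S₂_add a b ha hb
  neg_mem' := fun {a} ha => S₂_neg a ha

lemma mem_S₁ (a : AEx) : a ∈ S₁ ↔ memS₁ a := Iff.rfl
lemma mem_S₂ (a : AEx) : a ∈ S₂ ↔ memS₂ a := Iff.rfl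

lemma S₁_gen : ∀ a : AEx, memS₁ a →
    ∃ n : Fin 2, ∃ m : Fin 8, a = (n : ℕ) • ((1, 2, 0) : AEx) + (m : ℕ) • ((0, 0, 1) : AEx) := by
  decide

lemma S₂_gen : ∀ a : AEx, memS₂ a →
    ∃ n : Fin 2, ∃ m : Fin 2, ∃ k : Fin 4, a = (n : ℕ) • ((1, 0, 0) : AEx)
      + (m : ℕ) • ((0, 2, 0) : AEx) + (k : ℕ) • ((0, 0, 2) : AEx) := by
  decide

lemma L₁_eq : AddSubgroup.closure {((0, 0, 1) : AEx), ((1, 2, 0) : AEx)} = S₁ := by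
  apply le_antisymm
  · rw [AddSubgroup.closure_le]
    intro x hx
    rcases hx with h | h <;> subst h <;> exact (mem_S₁ _).mpr (by decide)
  · intro a ha
    obtain ⟨n, m, rfl⟩ := S₁_gen a ha
    exact add_mem (nsmul_mem (AddSubgroup.subset_closure (by simp)) _)
      (nsmul_mem (AddSubgroup.subset_closure (by simp)) _)

lemma L₂_eq : AddSubgroup.closure {((1, 0, 0) : AEx), ((0, 2, 0) : AEx), ((0, 0, 2) : AEx)} = S₂ := by
  apply le_antisymm
  · rw [AddSubgroup.closure_le]
    intro x hx
    rcases hx with h | h | h <;> subst h <;> exact (mem_S₂ _).mpr (by decide)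
  · intro a ha
    obtain ⟨n, m, k, rfl⟩ := S₂_gen a ha
    exact add_mem (add_mem (nsmul_mem (AddSubgroup.subset_closure (by simp)) _)
      (nsmul_mem (AddSubgroup.subset_closure (by simp)) _))
      (nsmul_mem (AddSubgroup.subset_closure (by simp)) _)

lemma perp₁ : ∀ a : AEx, memS₁ a ↔ ∀ l : AEx, memS₁ l → PdEx a l := by decide
lemma perp₂ : ∀ a : AEx, memS₂ a ↔ ∀ l : AEx, memS₂ l → PdEx a l := by decide

def g₁ : (ZMod 2 × ZMod 8) →+ AEx :=
  AddMonoidHom.mk' (fun p => (p.1, (2 * p.1.val : ZMod 4), p.2)) (by decide)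

def g₂ : (ZMod 2 × ZMod 2 × ZMod 4) →+ AEx :=
  AddMonoidHom.mk' (fun p => (p.1, (2 * p.2.1.val : ZMod 4), (2 * p.2.2.val : ZMod 8))) (by decide)

lemma g₁_mem : ∀ p, g₁ p ∈ S₁ := fun p => (mem_S₁ _).mpr (by revert p; decide)
lemma g₂_mem : ∀ p, g₂ p ∈ S₂ := fun p => (mem_S₂ _).mpr (by revert p; decide)
lemma g₁_inj : ∀ p q, g₁ p = g₁ q → p = q := by decide
lemma g₂_inj : ∀ p q, g₂ p = g₂ q → p = q := by decide
lemma g₁_surj : ∀ a : AEx, memS₁ a → ∃ p, g₁ p = a := by decide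
lemma g₂_surj : ∀ a : AEx, memS₂ a → ∃ p, g₂ p = a := by decide

noncomputable def e₁ : (ZMod 2 × ZMod 8) ≃+ S₁ :=
  AddEquiv.ofBijective (g₁.codRestrict S₁ g₁_mem)
    ⟨fun p q h => g₁_inj p q (congrArg Subtype.val h),
     fun ⟨a, ha⟩ => by
        obtain ⟨p, hp⟩ := g₁_surj a ha
        exact ⟨p, Subtype.ext hp⟩⟩

noncomputable def e₂ : (ZMod 2 × ZMod 2 × ZMod 4) ≃+ S₂ :=
  AddEquiv.ofBijective (g₂.codRestrict S₂ g₂_mem)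
    ⟨fun p q h => g₂_inj p q (congrArg Subtype.val h),
     fun ⟨a, ha⟩ => by
        obtain ⟨p, hp⟩ := g₂_surj a ha
        exact ⟨p, Subtype.ext hp⟩⟩

/-- `L₁ = ⟨e₃, e₁ + 2e₂⟩` and `L₂ = ⟨e₁, 2e₂, 2e₃⟩` are both Lagrangians of
`(ℤ/2 × ℤ/4 × ℤ/8, phiEx)`; `L₁ ≅ ℤ/2 × ℤ/8`, `L₂ ≅ ℤ/2 × ℤ/2 × ℤ/4`, and `L₁` is not
isomorphic to `L₂`. -/
theorem lagrangians_not_isomorphic :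
    ∀ L₁ L₂ : AddSubgroup (ZMod 2 × ZMod 4 × ZMod 8),
      L₁ = AddSubgroup.closure {((0, 0, 1) : ZMod 2 × ZMod 4 × ZMod 8),
        ((1, 2, 0) : ZMod 2 × ZMod 4 × ZMod 8)} →
      L₂ = AddSubgroup.closure {((1, 0, 0) : ZMod 2 × ZMod 4 × ZMod 8),
        ((0, 2, 0) : ZMod 2 × ZMod 4 × ZMod 8), ((0, 0, 2) : ZMod 2 × ZMod 4 × ZMod 8)} →
      ((L₁ : Set (ZMod 2 × ZMod 4 × ZMod 8)) = {a | ∀ l ∈ L₁, phiEx a l = 0}) ∧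
      ((L₂ : Set (ZMod 2 × ZMod 4 × ZMod 8)) = {a | ∀ l ∈ L₂, phiEx a l = 0}) ∧
      Nonempty (L₁ ≃+ ZMod 2 × ZMod 8) ∧
      Nonempty (L₂ ≃+ ZMod 2 × ZMod 2 × ZMod 4) ∧
      IsEmpty (L₁ ≃+ L₂) := by
  intro L₁ L₂ hL₁ hL₂
  have h1 : L₁ = S₁ := by rw [hL₁, L₁_eq]
  have h2 : L₂ = S₂ := by rw [hL₂, L₂_eq]
  subst h1 h2
  refine ⟨?_, ?_, ⟨e₁.symm⟩, ⟨e₂.symm⟩, ?_⟩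
  · ext a
    simp only [SetLike.mem_coe, Set.mem_setOf_eq, mem_S₁, phi_zero_iff]
    exact perp₁ a
  · ext a
    simp only [SetLike.mem_coe, Set.mem_setOf_eq, mem_S₂, phi_zero_iff]
    exact perp₂ a
  · constructor
    intro f
    have c : (ZMod 2 × ZMod 8) ≃+ (ZMod 2 × ZMod 2 × ZMod 4) := (e₁.trans f).trans e₂.symm
    have h4 : ∀ y : ZMod 2 × ZMod 2 × ZMod 4, 4 • y = 0 := by decide
    have h8 : (4 : ℕ) • ((0, 1) : ZMod 2 × ZMod 8) ≠ 0 := by decide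
    apply h8
    apply c.injective
    rw [map_nsmul, map_zero, h4]
end

section
/- Let p be prime, (Â, φ̂) a finite alternate module, and A ≤ Â a subgroup of index p with induced form φ. If the kernel K_φ of (A, φ) is not contained in the kernel K_{φ̂} of (Â, φ̂), then K_{φ̂} ≤ K_φ, [K_φ : K_{φ̂}] = p, and √(|A||K_φ|) = √(|Â||K_{φ̂}|) (the Lagrangian cardinalities agree). -/
/-!
Write `K` for the kernel of `φ̂` and `K_A` for the kernel of the induced form on `A`. Since `A`
has prime index, `A` together with any element outside it generates `Â`. If `z ∈ K_A \ K`, then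
`z` cannot be orthogonal to any element outside `A`; as `K` is orthogonal to `z`, this forces
`K ≤ A` and hence `K ≤ K_A`. Fixing `w ∉ A`, the map `z ↦ φ̂(z, w)` on `K_A` has kernel `K`, and
its image is a nonzero subgroup of the `p`-torsion of `ℚ/ℤ`, which has order `p`. So
`|K_A| = p |K|`, and together with `|Â| = p |A|` this gives the equality of `|A| |K_A|` and
`|Â| |K|`.
-/

namespace AddSubgroup

variable {G : Type*} [AddGroup G]

theorem sup_zmultiples_eq_top_of_index_prime {H : AddSubgroup G} (hH : H.index.Prime) {x : G}
    (hx : x ∉ H) : H ⊔ zmultiples x = ⊤ := by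
  have hle : H ≤ H ⊔ zmultiples x := le_sup_left
  rw [← relIndex_mul_index hle, Nat.prime_mul_iff] at hH
  rcases hH with ⟨-, hindex⟩ | ⟨-, hrel⟩
  · exact index_eq_one.mp hindex
  · exact absurd (relIndex_eq_one.mp hrel (mem_sup_right (mem_zmultiples x))) hx

theorem natCard_eq_of_forall_nsmul_eq_zero {p : ℕ} (hp : p.Prime)
    (htors : {t : G | p • t = 0}.encard ≤ p) {S : AddSubgroup G} (hS : S ≠ ⊥)
    (hSp : ∀ t ∈ S, p • t = 0) : Nat.card S = p := by
  have hencard : (S : Set G).encard ≤ p := (Set.encard_le_encard fun t ht => hSp t ht).trans htors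
  have hfin : (S : Set G).Finite := Set.finite_of_encard_le_coe hencard
  have : Finite S := hfin
  have hle : Nat.card S ≤ p := by
    rw [← hfin.cast_ncard_eq] at hencard
    exact_mod_cast hencard
  obtain ⟨u, huS, hu⟩ := S.bot_or_exists_ne_zero.resolve_left hS
  have : Fact p.Prime := ⟨hp⟩
  have hdvd : p ∣ Nat.card S := by
    simpa [addOrderOf_eq_prime (hSp u huS) hu] using S.addOrderOf_dvd_natCard huS
  exact le_antisymm hle (Nat.le_of_dvd Nat.card_pos hdvd)

end AddSubgroup

namespace AddMonoidHom

variable {M N : Type*} [AddCommGroup M] [AddCommGroup N] (B : M →+ M →+ N)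

theorem apply_swap_eq_neg_s18 (halt : ∀ x, B x x = 0) (x y : M) : B y x = -B x y := by
  have h := halt (x + y)
  simp only [map_add, add_apply, halt, zero_add, add_zero] at h
  exact eq_neg_of_add_eq_zero_left h

def leftOrthogonal (H : AddSubgroup M) : AddSubgroup M where
  carrier := {x | ∀ y ∈ H, B x y = 0}
  zero_mem' _ _ := by simp
  add_mem' ha hb y hy := by simp [ha y hy, hb y hy]
  neg_mem' ha y hy := by simp [ha y hy]

def kerRestrict (H : AddSubgroup M) : AddSubgroup M :=
  H ⊓ B.leftOrthogonal H

theorem eq_zero_of_mem_leftOrthogonal_of_sup_eq_top {H : AddSubgroup M} {w x : M}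
    (hsup : H ⊔ AddSubgroup.zmultiples w = ⊤) (hx : x ∈ B.leftOrthogonal H) (hw : B x w = 0) :
    B x = 0 := by
  have h : H ⊔ AddSubgroup.zmultiples w ≤ (B x).ker :=
    sup_le (fun y hy => hx y hy) (AddSubgroup.zmultiples_le.mpr hw)
  rw [hsup] at h
  exact AddMonoidHom.ext fun y => h (AddSubgroup.mem_top y)

theorem ker_le_kerRestrict_of_not_kerRestrict_le (halt : ∀ x, B x x = 0) {H : AddSubgroup M}
    (hH : H.index.Prime) (hK : ¬B.kerRestrict H ≤ B.ker) : B.ker ≤ B.kerRestrict H := by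
  obtain ⟨z, hzH, hz⟩ := SetLike.not_le_iff_exists.mp hK
  intro x hx
  have hxH : x ∈ H := by
    by_contra hxH
    refine hz (B.eq_zero_of_mem_leftOrthogonal_of_sup_eq_top
      (AddSubgroup.sup_zmultiples_eq_top_of_index_prime hH hxH) hzH.2 ?_)
    rw [B.apply_swap_eq_neg_s18 halt, DFunLike.congr_fun hx z, zero_apply, neg_zero]
  exact ⟨hxH, fun y _ => DFunLike.congr_fun hx y⟩

theorem card_kerRestrict_eq_mul_card_ker {p : ℕ} (hp : p.Prime)
    (hN : {t : N | p • t = 0}.encard ≤ p) {H : AddSubgroup M} (hH : H.index = p)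
    (hK : ¬B.kerRestrict H ≤ B.ker) (hle : B.ker ≤ B.kerRestrict H) :
    Nat.card (B.kerRestrict H) = p * Nat.card B.ker := by
  obtain ⟨w, hw⟩ : ∃ w, w ∉ H := SetLike.exists_not_mem_of_ne_top H
    (fun h => hp.one_lt.ne' (by rw [← hH, h, AddSubgroup.index_top])) rfl
  have hsup := AddSubgroup.sup_zmultiples_eq_top_of_index_prime (hH ▸ hp) hw
  have hker : (B.flip w).ker ⊓ B.kerRestrict H = B.ker := by
    apply le_antisymm
    · rintro x ⟨hxw, hx⟩
      exact B.eq_zero_of_mem_leftOrthogonal_of_sup_eq_top hsup hx.2 hxw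
    · exact le_inf (fun x hx => DFunLike.congr_fun hx w) hle
  have himage : Nat.card ((B.kerRestrict H).map (B.flip w)) = p := by
    refine AddSubgroup.natCard_eq_of_forall_nsmul_eq_zero hp hN ?_ ?_
    · obtain ⟨z, hzH, hz⟩ := SetLike.not_le_iff_exists.mp hK
      refine AddSubgroup.ne_bot_iff_exists_ne_zero.mpr ⟨⟨B z w, z, hzH, rfl⟩, ?_⟩
      exact fun h0 => hz (B.eq_zero_of_mem_leftOrthogonal_of_sup_eq_top hsup hzH.2
        (congrArg Subtype.val h0))
    · rintro _ ⟨z, hz, rfl⟩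
      rw [flip_apply, ← map_nsmul, hz.2 _ (hH ▸ H.nsmul_index_mem w)]
  have hrel : B.ker.relIndex (B.kerRestrict H) = p := by
    rw [← hker, AddSubgroup.inf_relIndex_right, AddSubgroup.relIndex_ker, himage]
  rw [← AddSubgroup.relIndex_bot_left, ← AddSubgroup.relIndex_mul_relIndex ⊥ _ _ bot_le hle,
    hrel, AddSubgroup.relIndex_bot_left, mul_comm]

end AddMonoidHom

theorem index_p_extension_constant_lagrangians_general
    {Ahat : Type*} [AddCommGroup Ahat]
    (p : ℕ) (hp : p.Prime)
    (φ : Ahat → Ahat → AddCircle (1 : ℚ))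
    (hL : ∀ a b c : Ahat, φ (a + b) c = φ a c + φ b c)
    (hR : ∀ a b c : Ahat, φ a (b + c) = φ a b + φ a c)
    (halt : ∀ a : Ahat, φ a a = 0)
    (A : AddSubgroup Ahat) (hidx : A.index = p)
    (hker : ¬ ({x : Ahat | x ∈ A ∧ ∀ y ∈ A, φ x y = 0} ⊆ {x : Ahat | ∀ y : Ahat, φ x y = 0})) :
    ({x : Ahat | ∀ y : Ahat, φ x y = 0} ⊆ {x : Ahat | x ∈ A ∧ ∀ y ∈ A, φ x y = 0}) ∧
    Nat.card {x : Ahat | x ∈ A ∧ ∀ y ∈ A, φ x y = 0} =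
      p * Nat.card {x : Ahat | ∀ y : Ahat, φ x y = 0} ∧
    Nat.card A * Nat.card {x : Ahat | x ∈ A ∧ ∀ y ∈ A, φ x y = 0} =
      Nat.card Ahat * Nat.card {x : Ahat | ∀ y : Ahat, φ x y = 0} := by
  let B : Ahat →+ Ahat →+ AddCircle (1 : ℚ) :=
    AddMonoidHom.mk' (fun x => AddMonoidHom.mk' (φ x) (hR x)) fun a b =>
      AddMonoidHom.ext (hL a b)
  have hK : {x : Ahat | ∀ y : Ahat, φ x y = 0} = B.ker := by
    ext x
    simp [B, DFunLike.ext_iff]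
  have hKA : {x : Ahat | x ∈ A ∧ ∀ y ∈ A, φ x y = 0} = B.kerRestrict A := rfl
  have htors : {t : AddCircle (1 : ℚ) | p • t = 0}.encard ≤ p :=
    AddCircle.card_torsion_le_of_isSMulRegular 1 p hp.ne_zero
      (.of_right_eq_zero_of_smul fun _ => by simp [hp.ne_zero])
  rw [hK, hKA, SetLike.coe_subset_coe] at hker ⊢
  have hle := B.ker_le_kerRestrict_of_not_kerRestrict_le halt (hidx ▸ hp) hker
  have hcard := B.card_kerRestrict_eq_mul_card_ker hp htors hidx hker hle
  refine ⟨hle, hcard, ?_⟩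
  rw [← A.card_mul_index, hidx, mul_assoc]
  exact congrArg (Nat.card A * ·) hcard

/-- Let `A` be a subgroup of index `p` of a finite alternate module `(Ahat, φ̂)`, with the
induced form. If the kernel of the induced form is not contained in the kernel of `φ̂`,
then the kernels are nested the other way with index `p`, and the Lagrangian
cardinalities of the two modules agree. -/
theorem index_p_extension_constant_lagrangians
    {Ahat : Type*} [AddCommGroup Ahat] [Fintype Ahat]
    (p : ℕ) (hp : p.Prime)
    (φ : Ahat → Ahat → AddCircle (1 : ℚ))
    (hL : ∀ a b c : Ahat, φ (a + b) c = φ a c + φ b c)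
    (hR : ∀ a b c : Ahat, φ a (b + c) = φ a b + φ a c)
    (halt : ∀ a : Ahat, φ a a = 0)
    (A : AddSubgroup Ahat) (hidx : A.index = p)
    (hker : ¬ ({x : Ahat | x ∈ A ∧ ∀ y ∈ A, φ x y = 0} ⊆ {x : Ahat | ∀ y : Ahat, φ x y = 0})) :
    ({x : Ahat | ∀ y : Ahat, φ x y = 0} ⊆ {x : Ahat | x ∈ A ∧ ∀ y ∈ A, φ x y = 0}) ∧
    Nat.card {x : Ahat | x ∈ A ∧ ∀ y ∈ A, φ x y = 0} =
      p * Nat.card {x : Ahat | ∀ y : Ahat, φ x y = 0} ∧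
    Nat.card A * Nat.card {x : Ahat | x ∈ A ∧ ∀ y ∈ A, φ x y = 0} =
      Nat.card Ahat * Nat.card {x : Ahat | ∀ y : Ahat, φ x y = 0} :=
  index_p_extension_constant_lagrangians_general p hp φ hL hR halt A hidx hker
end
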